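/- arXiv:2010.13695 — 8 statements merged into one kernel-verified Lean document; each statement's English description precedes it below -/
import Mathlib

section
/- Let $f, g : \mathbb{R} \to \mathbb{R}$ be $C^2$ with second derivatives in $[C_1, C_2]$ for $0 < C_1 \le C_2$, attaining minimum value $0$ at $\theta_f, \theta_g$ respectively. Denote by $f_+^{-1}$ and $g_+^{-1}$ the inverses of $f$ and $g$ restricted to $[\theta_f, \infty)$ and $[\theta_g, \infty)$ respectively. Then for all $a, b \ge 0$, $|g_+^{-1}(a) - g_+^{-1}(b)| \le (C_2/C_1)^{3/2} |f_+^{-1}(a) - f_+^{-1}(b)|$. -/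
/-! Since `f'' ∈ [C1, C2]` and `f'(θf) = 0`, increments of `f` on `[θf, ∞)` are squeezed between
those of `C1/2 · (u - θf)²` and `C2/2 · (u - θf)²`, and likewise for `g`. Writing
`s, t = f₊⁻¹(a) - θf, f₊⁻¹(b) - θf` and `S, T = g₊⁻¹(a) - θg, g₊⁻¹(b) - θg` with `b ≤ a`, this gives
`S² - T² ≤ (C2/C1)(s² - t²)` and `s + t ≤ √(C2/C1) (S + T)`; dividing by `S + T` produces the
factor `(C2/C1)^{3/2}`. -/

open Set

lemma sub_le_sub_of_deriv_le {f g : ℝ → ℝ} {D : Set ℝ} (hD : Convex ℝ D)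
    (hf : Differentiable ℝ f) (hg : Differentiable ℝ g)
    (hfg : ∀ u ∈ interior D, deriv f u ≤ deriv g u) {x y : ℝ} (hx : x ∈ D) (hy : y ∈ D)
    (hxy : x ≤ y) : f y - f x ≤ g y - g x := by
  have hmono : MonotoneOn (g - f) D :=
    monotoneOn_of_deriv_nonneg hD (hg.sub hf).continuous.continuousOn
      (hg.sub hf).differentiableOn fun u hu => by
        rw [deriv_sub (hg u) (hf u)]
        exact sub_nonneg.mpr (hfg u hu)
  have := hmono hx hy hxy
  simp only [Pi.sub_apply] at this
  linarith

lemma deriv_half_mul_sq_sub (C θ u : ℝ) :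
    deriv (fun v => C / 2 * (v - θ) ^ 2) u = C * (u - θ) := by
  have h : HasDerivAt (fun v => C / 2 * (v - θ) ^ 2) (C / 2 * (2 * (u - θ) ^ 1 * 1)) u :=
    (((hasDerivAt_id u).sub_const θ).pow 2).const_mul (C / 2)
  rw [h.deriv]
  ring

section UniformlyConvex

variable {f : ℝ → ℝ} {C1 C2 θ : ℝ}

lemma deriv_mem_Icc_of_deriv_deriv_mem_Icc (hf : ContDiff ℝ 2 f)
    (hf'' : ∀ u, deriv (deriv f) u ∈ Icc C1 C2) (hθ : deriv f θ = 0) {u : ℝ} (hu : θ ≤ u) :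
    deriv f u ∈ Icc (C1 * (u - θ)) (C2 * (u - θ)) := by
  have hf' : Differentiable ℝ (deriv f) :=
    (contDiff_succ_iff_deriv.mp (show ContDiff ℝ (1 + 1) f from hf)).2.2.differentiable
      one_ne_zero
  have lower := mul_sub_le_image_sub_of_le_deriv hf' (fun v => (hf'' v).1) hu
  have upper := image_sub_le_mul_sub_of_deriv_le hf' (fun v => (hf'' v).2) hu
  rw [hθ, sub_zero] at lower upper
  exact ⟨lower, upper⟩

lemma sub_mem_Icc_of_deriv_deriv_mem_Icc (hf : ContDiff ℝ 2 f)
    (hf'' : ∀ u, deriv (deriv f) u ∈ Icc C1 C2) (hθ : deriv f θ = 0) {x y : ℝ} (hy : θ ≤ y)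
    (hyx : y ≤ x) :
    f x - f y ∈
      Icc (C1 / 2 * ((x - θ) ^ 2 - (y - θ) ^ 2)) (C2 / 2 * ((x - θ) ^ 2 - (y - θ) ^ 2)) := by
  have hfd : Differentiable ℝ f := hf.differentiable two_ne_zero
  have hq (C : ℝ) : Differentiable ℝ fun v => C / 2 * (v - θ) ^ 2 := by fun_prop
  have hderiv {u : ℝ} (hu : u ∈ interior (Ici θ)) :=
    deriv_mem_Icc_of_deriv_deriv_mem_Icc hf hf'' hθ (interior_subset hu : u ∈ Ici θ)
  constructor
  · have := sub_le_sub_of_deriv_le (convex_Ici θ) (hq C1) hfd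
      (fun u hu => (deriv_half_mul_sq_sub C1 θ u).trans_le (hderiv hu).1) hy (hy.trans hyx) hyx
    linarith
  · have := sub_le_sub_of_deriv_le (convex_Ici θ) hfd (hq C2)
      (fun u hu => (hderiv hu).2.trans_eq (deriv_half_mul_sq_sub C2 θ u).symm) hy (hy.trans hyx)
      hyx
    linarith

variable {finv : ℝ → ℝ}

lemma monotoneOn_of_rightInverse (hf : ContDiff ℝ 2 f)
    (hf'' : ∀ u, deriv (deriv f) u ∈ Icc C1 C2) (hC1 : 0 < C1) (hθ : deriv f θ = 0)
    (hfinv : ∀ a : ℝ, 0 ≤ a → θ ≤ finv a ∧ f (finv a) = a) : MonotoneOn finv (Ici 0) := by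
  intro b hb a ha hba
  by_contra! hlt
  obtain ⟨hθa, hfa⟩ := hfinv a ha
  obtain ⟨hθb, hfb⟩ := hfinv b hb
  have := (sub_mem_Icc_of_deriv_deriv_mem_Icc hf hf'' hθ hθa hlt.le).1
  rw [hfa, hfb] at this
  nlinarith [mul_pos hC1 (mul_pos (sub_pos.mpr hlt) (by linarith : 0 < finv b + finv a - 2 * θ))]

lemma two_mul_mem_Icc_of_rightInverse (hf : ContDiff ℝ 2 f)
    (hf'' : ∀ u, deriv (deriv f) u ∈ Icc C1 C2) (hθ : deriv f θ = 0) (hfθ : f θ = 0)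
    (hfinv : ∀ a : ℝ, 0 ≤ a → θ ≤ finv a ∧ f (finv a) = a) {a : ℝ} (ha : 0 ≤ a) :
    2 * a ∈ Icc (C1 * (finv a - θ) ^ 2) (C2 * (finv a - θ) ^ 2) := by
  obtain ⟨hθa, hfa⟩ := hfinv a ha
  have := sub_mem_Icc_of_deriv_deriv_mem_Icc hf hf'' hθ le_rfl hθa
  rw [hfa, hfθ, sub_self] at this
  constructor <;> linarith [this.1, this.2]

lemma two_mul_sub_mem_Icc_of_rightInverse (hf : ContDiff ℝ 2 f)
    (hf'' : ∀ u, deriv (deriv f) u ∈ Icc C1 C2) (hθ : deriv f θ = 0)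
    (hfinv : ∀ a : ℝ, 0 ≤ a → θ ≤ finv a ∧ f (finv a) = a) {a b : ℝ} (ha : 0 ≤ a) (hb : 0 ≤ b)
    (hba : finv b ≤ finv a) :
    2 * (a - b) ∈ Icc (C1 * ((finv a - θ) ^ 2 - (finv b - θ) ^ 2))
      (C2 * ((finv a - θ) ^ 2 - (finv b - θ) ^ 2)) := by
  have := sub_mem_Icc_of_deriv_deriv_mem_Icc hf hf'' hθ (hfinv b hb).1 hba
  rw [(hfinv a ha).2, (hfinv b hb).2] at this
  constructor <;> linarith [this.1, this.2]

end UniformlyConvex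

lemma sub_le_rpow_mul_sub {C1 C2 s t S T : ℝ} (hC1 : 0 < C1) (hC12 : C1 ≤ C2) (ht : 0 ≤ t)
    (hts : t ≤ s) (hS : 0 ≤ S) (hT : 0 ≤ T) (hsS : C1 * s ^ 2 ≤ C2 * S ^ 2)
    (htT : C1 * t ^ 2 ≤ C2 * T ^ 2) (hinc : C1 * (S ^ 2 - T ^ 2) ≤ C2 * (s ^ 2 - t ^ 2)) :
    S - T ≤ (C2 / C1) ^ ((3 : ℝ) / 2) * (s - t) := by
  set r := C2 / C1
  have hr : 0 ≤ r := div_nonneg (hC1.le.trans hC12) hC1.le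
  have scale {p q : ℝ} (h : C1 * p ≤ C2 * q) : p ≤ r * q := by
    rw [div_mul_eq_mul_div, le_div_iff₀ hC1]; linarith
  set K := √r
  have hK : 0 ≤ K := Real.sqrt_nonneg r
  have hK2 : K ^ 2 = r := Real.sq_sqrt hr
  have hroot {p q : ℝ} (hp : 0 ≤ p) (hq : 0 ≤ q) (h : C1 * p ^ 2 ≤ C2 * q ^ 2) : p ≤ K * q := by
    calc p = √(p ^ 2) := (Real.sqrt_sq hp).symm
      _ ≤ √(r * q ^ 2) := Real.sqrt_le_sqrt (scale h)
      _ = K * q := by rw [Real.sqrt_mul hr, Real.sqrt_sq hq]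
  have hpow : r ^ ((3 : ℝ) / 2) = K ^ 3 := by
    rw [show (3 : ℝ) / 2 = 1 + 1 / 2 by norm_num, Real.rpow_add' hr (by norm_num), Real.rpow_one,
      ← Real.sqrt_eq_rpow]
    linear_combination (-K) * hK2
  rw [hpow]
  rcases (add_nonneg hS hT).eq_or_lt with hST | hST
  · have : S - T = 0 := by linarith
    rw [this]
    exact mul_nonneg (pow_nonneg hK 3) (sub_nonneg.mpr hts)
  have hsum : s + t ≤ K * (S + T) := by
    linarith [hroot (ht.trans hts) hS hsS, hroot ht hT htT]
  refine le_of_mul_le_mul_right ?_ hST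
  calc (S - T) * (S + T) = S ^ 2 - T ^ 2 := by ring
    _ ≤ K ^ 2 * (s ^ 2 - t ^ 2) := hK2 ▸ scale hinc
    _ = K ^ 2 * (s - t) * (s + t) := by ring
    _ ≤ K ^ 2 * (s - t) * (K * (S + T)) :=
        mul_le_mul_of_nonneg_left hsum (mul_nonneg (sq_nonneg K) (sub_nonneg.mpr hts))
    _ = K ^ 3 * (s - t) * (S + T) := by ring

theorem stmt1 (f g finv ginv : ℝ → ℝ) (C1 C2 θf θg : ℝ)
    (hC1 : 0 < C1) (hC12 : C1 ≤ C2)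
    (hf : ContDiff ℝ 2 f) (hg : ContDiff ℝ 2 g)
    (hf'' : ∀ u, deriv (deriv f) u ∈ Set.Icc C1 C2)
    (hg'' : ∀ u, deriv (deriv g) u ∈ Set.Icc C1 C2)
    (hfθ : f θf = 0) (hgθ : g θg = 0)
    (hfmin : ∀ u, 0 ≤ f u) (hgmin : ∀ u, 0 ≤ g u)
    (hfinv : ∀ a : ℝ, 0 ≤ a → θf ≤ finv a ∧ f (finv a) = a)
    (hginv : ∀ a : ℝ, 0 ≤ a → θg ≤ ginv a ∧ g (ginv a) = a) :
    ∀ a b : ℝ, 0 ≤ a → 0 ≤ b →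
      |ginv a - ginv b| ≤ (C2 / C1) ^ ((3 : ℝ) / 2) * |finv a - finv b| := by
  intro a b ha hb
  wlog hba : b ≤ a generalizing a b
  · rw [abs_sub_comm, abs_sub_comm (finv a)]
    exact this b a hb ha (le_of_not_ge hba)
  have hf0 : deriv f θf = 0 :=
    IsLocalMin.deriv_eq_zero (Filter.Eventually.of_forall fun u => hfθ ▸ hfmin u)
  have hg0 : deriv g θg = 0 :=
    IsLocalMin.deriv_eq_zero (Filter.Eventually.of_forall fun u => hgθ ▸ hgmin u)
  have hfba := monotoneOn_of_rightInverse hf hf'' hC1 hf0 hfinv hb ha hba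
  have hgba := monotoneOn_of_rightInverse hg hg'' hC1 hg0 hginv hb ha hba
  rw [abs_of_nonneg (sub_nonneg.mpr hgba), abs_of_nonneg (sub_nonneg.mpr hfba)]
  have hfa := two_mul_mem_Icc_of_rightInverse hf hf'' hf0 hfθ hfinv ha
  have hfb := two_mul_mem_Icc_of_rightInverse hf hf'' hf0 hfθ hfinv hb
  have hga := two_mul_mem_Icc_of_rightInverse hg hg'' hg0 hgθ hginv ha
  have hgb := two_mul_mem_Icc_of_rightInverse hg hg'' hg0 hgθ hginv hb
  have hfab := two_mul_sub_mem_Icc_of_rightInverse hf hf'' hf0 hfinv ha hb hfba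
  have hgab := two_mul_sub_mem_Icc_of_rightInverse hg hg'' hg0 hginv ha hb hgba
  have key := sub_le_rpow_mul_sub hC1 hC12 (sub_nonneg.mpr (hfinv b hb).1) (by linarith)
    (sub_nonneg.mpr (hginv a ha).1) (sub_nonneg.mpr (hginv b hb).1) (hfa.1.trans hga.2)
    (hfb.1.trans hgb.2) (hgab.1.trans hfab.2)
  rwa [sub_sub_sub_cancel_right, sub_sub_sub_cancel_right] at key
end

section
/- Let $u_M^-, u_M^+ : \mathbb{R} \to \mathbb{R}$ satisfy $u_M^- \le u_M^+$ pointwise with $u_M^-, u_M^+ \in BV(\mathbb{R})$, and let $\pi(x, u)$ denote the projection of $u$ onto $[u_M^-(x), u_M^+(x)]$. Then for any $w \in BV(\mathbb{R})$, the map $x \mapsto \pi(x, w(x))$ belongs to $BV(\mathbb{R})$, and $TV(\pi(\cdot, w(\cdot))) \le TV(w) + TV(u_M^-) + TV(u_M^+)$. -/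
open Set

theorem edist_max_max_le (a b c d : ℝ) : edist (max a b) (max c d) ≤ edist a c + edist b d := by
  rw [edist_dist, edist_dist, edist_dist, ← ENNReal.ofReal_add dist_nonneg dist_nonneg]
  exact ENNReal.ofReal_le_ofReal <|
    (abs_max_sub_max_le_max a b c d).trans (max_le_add_of_nonneg (abs_nonneg _) (abs_nonneg _))

theorem edist_min_min_le (a b c d : ℝ) : edist (min a b) (min c d) ≤ edist a c + edist b d := by
  rw [edist_dist, edist_dist, edist_dist, ← ENNReal.ofReal_add dist_nonneg dist_nonneg]
  exact ENNReal.ofReal_le_ofReal <|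
    (abs_min_sub_min_le_max a b c d).trans (max_le_add_of_nonneg (abs_nonneg _) (abs_nonneg _))

section

variable {α E F G : Type*} [LinearOrder α]
  [PseudoEMetricSpace E] [PseudoEMetricSpace F] [PseudoEMetricSpace G]

theorem eVariationOn_le_add_of_edist_le {f : α → E} {g : α → F} {h : α → G} {s : Set α}
    (hfgh : ∀ x ∈ s, ∀ y ∈ s, edist (f x) (f y) ≤ edist (g x) (g y) + edist (h x) (h y)) :
    eVariationOn f s ≤ eVariationOn g s + eVariationOn h s := by
  refine iSup_le fun ⟨n, u, hu, us⟩ => ?_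
  calc ∑ i ∈ Finset.range n, edist (f (u (i + 1))) (f (u i))
      ≤ ∑ i ∈ Finset.range n,
          (edist (g (u (i + 1))) (g (u i)) + edist (h (u (i + 1))) (h (u i))) :=
        Finset.sum_le_sum fun i _ => hfgh _ (us _) _ (us _)
    _ = _ := Finset.sum_add_distrib
    _ ≤ eVariationOn g s + eVariationOn h s :=
        add_le_add (eVariationOn.sum_le hu us) (eVariationOn.sum_le hu us)

end

theorem eVariationOn_max_le {α : Type*} [LinearOrder α] (f g : α → ℝ) (s : Set α) :
    eVariationOn (fun x => max (f x) (g x)) s ≤ eVariationOn f s + eVariationOn g s :=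
  eVariationOn_le_add_of_edist_le fun _ _ _ _ => edist_max_max_le _ _ _ _

theorem eVariationOn_min_le {α : Type*} [LinearOrder α] (f g : α → ℝ) (s : Set α) :
    eVariationOn (fun x => min (f x) (g x)) s ≤ eVariationOn f s + eVariationOn g s :=
  eVariationOn_le_add_of_edist_le fun _ _ _ _ => edist_min_min_le _ _ _ _

theorem stmt5_general (uMm uMp w : ℝ → ℝ) :
    eVariationOn (fun x => min (max (w x) (uMm x)) (uMp x)) Set.univ ≤
      eVariationOn w Set.univ + eVariationOn uMm Set.univ + eVariationOn uMp Set.univ :=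
  (eVariationOn_min_le _ uMp univ).trans
    (add_le_add (eVariationOn_max_le w uMm univ) le_rfl)

theorem stmt5 (uMm uMp w : ℝ → ℝ) (h : ∀ x, uMm x ≤ uMp x)
    (hm : eVariationOn uMm Set.univ ≠ ⊤) (hp : eVariationOn uMp Set.univ ≠ ⊤)
    (hw : eVariationOn w Set.univ ≠ ⊤) :
    eVariationOn (fun x => min (max (w x) (uMm x)) (uMp x)) Set.univ ≤
      eVariationOn w Set.univ + eVariationOn uMm Set.univ + eVariationOn uMp Set.univ :=
  stmt5_general uMm uMp w
end

section
/- Let $f : \mathbb{R} \to \mathbb{R}$ be convex. Suppose states $u_1, u_2, \ldots, u_k$ (with $k \ge 3$) are such that for each $j$, the discontinuity (front) between $u_j$ and $u_{j+1}$ travels with the Rankine–Hugoniot speed $s_j = \frac{f(u_{j+1}) - f(u_j)}{u_{j+1} - u_j}$ (when $u_j \ne u_{j+1}$), each front satisfies one of: (i) $u_j > u_{j+1}$, (ii) $u_{j+1} > u_j$ and $f$ is affine on $[u_j, u_{j+1}]$, or (iii) $u_{j+1} > u_j$ and $f$ is differentiable with no 'break point' (point of nondifferentiability of the piecewise-linear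 $f$) in $(u_j, u_{j+1})$; and the speeds satisfy $s_1 > s_2 > \cdots > s_{k-1}$ (so all fronts meet at a single point). Then either $u_1 > u_k$, or there is no break point of $f$ in the open interval $(u_1, u_k)$. -/
theorem stmt7 (f : ℝ → ℝ) (hconv : ConvexOn ℝ Set.univ f)
    (k : ℕ) (hk : 3 ≤ k) (u : ℕ → ℝ) (s : ℕ → ℝ)
    (hne : ∀ j, j + 1 < k → u j ≠ u (j + 1))
    (hs : ∀ j, j + 1 < k → s j = (f (u (j + 1)) - f (u j)) / (u (j + 1) - u j))
    (hfront : ∀ j, j + 1 < k →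
      (u (j + 1) < u j) ∨
      (u j < u (j + 1) ∧ ∃ c d : ℝ, ∀ x ∈ Set.Icc (u j) (u (j + 1)), f x = c * x + d) ∨
      (u j < u (j + 1) ∧ ∀ p ∈ Set.Ioo (u j) (u (j + 1)), DifferentiableAt ℝ f p))
    (hspeed : ∀ i j, i < j → j + 1 < k → s j < s i) :
    u (k - 1) < u 0 ∨ ∀ p ∈ Set.Ioo (u 0) (u (k - 1)), DifferentiableAt ℝ f p := by
  have esym : ∀ x y : ℝ, (f x - f y) / (x - y) = (f y - f x) / (y - x) := by
    intro x y; rw [← neg_div_neg_eq]; ring_nf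
  -- Lemma A: u (j+2) < u j
  have key : ∀ j, j + 2 < k → u (j + 2) < u j := by
    intro j hj
    by_contra hle
    push_neg at hle
    have h1 := hconv.secant_mono (Set.mem_univ (u (j + 1))) (Set.mem_univ (u j))
      (Set.mem_univ (u (j + 2))) (hne j (by omega)) ((hne (j + 1) (by omega)).symm) hle
    have e1 : s j = (f (u j) - f (u (j + 1))) / (u j - u (j + 1)) := by
      rw [hs j (by omega), esym]
    have e2 : s (j + 1) = (f (u (j + 2)) - f (u (j + 1))) / (u (j + 2) - u (j + 1)) := by
      have := hs (j + 1) (by omega)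
      rw [this, esym]
    have h2 := hspeed j (j + 1) (by omega) (by omega)
    rw [← e1, ← e2] at h1
    linarith
  -- parity chain
  have main : ∀ m, m < k → 2 ≤ m → u m < u (m % 2) := by
    intro m
    induction m using Nat.strong_induction_on with
    | _ m ih =>
      intro hm h2
      have hA : u m < u (m - 2) := by
        have := key (m - 2) (by omega)
        have e : m - 2 + 2 = m := by omega
        rwa [e] at this
      rcases lt_or_ge (m - 2) 2 with h | h
      · have : m - 2 = m % 2 := by omega
        rwa [this] at hA
      · have hB := ih (m - 2) (by omega) (by omega) h
        have e : (m - 2) % 2 = m % 2 := by omega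
        rw [e] at hB
        linarith
  by_cases h0 : u (k - 1) < u 0
  · exact Or.inl h0
  · right
    push_neg at h0
    have hm := main (k - 1) (by omega) (by omega)
    have hpar : (k - 1) % 2 = 0 ∨ (k - 1) % 2 = 1 := by omega
    have hlt1 : u (k - 1) < u 1 := by
      rcases hpar with h | h
      · rw [h] at hm; linarith
      · rwa [h] at hm
    have h01 : u 0 < u 1 := lt_of_le_of_lt h0 hlt1
    intro p hp
    have hp1 : p ∈ Set.Ioo (u 0) (u 1) := ⟨hp.1, lt_trans hp.2 hlt1⟩
    rcases hfront 0 (by omega) with h | ⟨_, c, d, haff⟩ | ⟨_, hdiff⟩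
    · exact absurd h (not_lt.mpr h01.le)
    · have heq : f =ᶠ[nhds p] fun x => c * x + d := by
        filter_upwards [Ioo_mem_nhds hp1.1 hp1.2] with x hx
        exact haff x ⟨hx.1.le, hx.2.le⟩
      have hd : DifferentiableAt ℝ (fun x : ℝ => c * x + d) p :=
        ((differentiable_id.const_mul c).add_const d).differentiableAt
      exact hd.congr_of_eventuallyEq heq
    · exact hdiff p hp1
end

section
/- Let $n \ge 1$ and define $f_n(u) = \frac{2}{n^{3/2}} u^2 + u^4$ and $g_n(u) = u^4$. Let $a_n = n^{-1-\delta}$ with $\delta \in (0, 1/4)$, and let $b_n = (g_n)_+^{-1}(f_n(a_n))$ be the unique nonnegative number with $b_n^4 = f_n(a_n)$. Then $b_n = \left(\frac{2}{n^{2\delta + 7/2}} + \frac{1}{n^{4 + 4\delta}}\right)^{1/4} \ge n^{-(7/8 + \delta/2)}$, and consequently the series $\sum_{n \ge 1} b_n$ diverges. -/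
theorem stmt11 (δ : ℝ) (hδ : δ ∈ Set.Ioo (0 : ℝ) (1 / 4))
    (a b : ℕ → ℝ)
    (ha : ∀ n : ℕ, 1 ≤ n → a n = (n : ℝ) ^ (-(1 + δ)))
    (hb : ∀ n : ℕ, 1 ≤ n →
      0 ≤ b n ∧ (b n) ^ 4 = 2 / (n : ℝ) ^ ((3 : ℝ) / 2) * (a n) ^ 2 + (a n) ^ 4) :
    (∀ n : ℕ, 1 ≤ n →
      b n = (2 / (n : ℝ) ^ (2 * δ + 7 / 2) + 1 / (n : ℝ) ^ (4 + 4 * δ)) ^ ((1 : ℝ) / 4) ∧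
      (n : ℝ) ^ (-(7 / 8 + δ / 2)) ≤ b n) ∧
    ¬ Summable (fun n : ℕ => b (n + 1)) := by
  obtain ⟨hδ0, hδ14⟩ := hδ
  have main : ∀ n : ℕ, 1 ≤ n →
      b n = (2 / (n : ℝ) ^ (2 * δ + 7 / 2) + 1 / (n : ℝ) ^ (4 + 4 * δ)) ^ ((1 : ℝ) / 4) ∧
      (n : ℝ) ^ (-(7 / 8 + δ / 2)) ≤ b n := by
    intro n hn
    have hn0 : (0 : ℝ) < (n : ℝ) := by exact_mod_cast hn
    obtain ⟨hb0, hb4⟩ := hb n hn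
    have ha2 : (a n) ^ 2 = (n : ℝ) ^ (-(2 * (1 + δ))) := by
      rw [ha n hn, ← Real.rpow_natCast _ 2, ← Real.rpow_mul hn0.le]
      ring_nf
    have ha4 : (a n) ^ 4 = (n : ℝ) ^ (-(4 + 4 * δ)) := by
      rw [ha n hn, ← Real.rpow_natCast _ 4, ← Real.rpow_mul hn0.le]
      ring_nf
    have key : (b n) ^ 4 = 2 / (n : ℝ) ^ (2 * δ + 7 / 2) + 1 / (n : ℝ) ^ (4 + 4 * δ) := by
      have hs : (n:ℝ) ^ (2 * δ + 7 / 2) = (n:ℝ) ^ (2 * (1 + δ)) * (n:ℝ) ^ ((3:ℝ)/2) := by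
        rw [← Real.rpow_add hn0]; ring_nf
      rw [hb4, ha2, ha4, Real.rpow_neg hn0.le (2 * (1 + δ)),
        Real.rpow_neg hn0.le (4 + 4 * δ), hs]
      have p1 : (0:ℝ) < (n:ℝ) ^ (2 * (1 + δ)) := Real.rpow_pos_of_pos hn0 _
      have p2 : (0:ℝ) < (n:ℝ) ^ ((3:ℝ)/2) := Real.rpow_pos_of_pos hn0 _
      field_simp
    have hbn : b n = (2 / (n : ℝ) ^ (2 * δ + 7 / 2) + 1 / (n : ℝ) ^ (4 + 4 * δ)) ^ ((1 : ℝ) / 4) := by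
      have := congrArg (fun x : ℝ => x ^ ((1 : ℝ) / 4)) key
      rw [← this, ← Real.rpow_natCast (b n) 4, ← Real.rpow_mul hb0]
      norm_num
    refine ⟨hbn, ?_⟩
    have hle : ((n : ℝ) ^ (-(7 / 8 + δ / 2))) ^ 4 ≤ (b n) ^ 4 := by
      rw [key, ← Real.rpow_natCast _ 4, ← Real.rpow_mul hn0.le]
      rw [show -(7 / 8 + δ / 2) * ((4:ℕ):ℝ) = -(2 * δ + 7 / 2) by push_cast; ring,
        Real.rpow_neg hn0.le, ← one_div]
      have h2 : (0:ℝ) < (n : ℝ) ^ (2 * δ + 7 / 2) := Real.rpow_pos_of_pos hn0 _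
      have h3 : (0:ℝ) ≤ 1 / (n : ℝ) ^ (4 + 4 * δ) := by positivity
      have h4 : 1 / (n : ℝ) ^ (2 * δ + 7 / 2) ≤ 2 / (n : ℝ) ^ (2 * δ + 7 / 2) := by
        gcongr
        norm_num
      linarith
    exact le_of_pow_le_pow_left₀ (by norm_num) hb0 hle
  refine ⟨main, ?_⟩
  intro hsum
  have hcomp : Summable (fun n : ℕ => ((n + 1 : ℕ) : ℝ) ^ (-(7 / 8 + δ / 2))) := by
    apply hsum.of_nonneg_of_le
    · intro n
      exact Real.rpow_nonneg (by positivity) _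
    · intro n
      exact (main (n + 1) (Nat.le_add_left 1 n)).2
  have hshift : Summable (fun n : ℕ => ((n : ℕ) : ℝ) ^ (-(7 / 8 + δ / 2))) := by
    rw [← summable_nat_add_iff 1]
    exact_mod_cast hcomp
  rw [Real.summable_nat_rpow] at hshift
  linarith
end

section
/- Let $f, g : \mathbb{R} \to \mathbb{R}$ be continuous, with $g$ decreasing on $(-\infty, \theta_g^-]$, zero on $[\theta_g^-, \theta_g^+]$, increasing on $[\theta_g^+, \infty)$, and similarly $f$ with constants $\theta_f^{\pm}$. Suppose $u_- , u_+ \in \mathbb{R}$ satisfy $g(u_-) = f(u_+)$ and the interface entropy inequality $\mathrm{sgn}(u_- - \theta_g)(g(u_-) - g(\theta_g)) - \mathrm{sgn}(u_+ - \theta_f)(f(u_+) - f(\theta_f)) \ge 0$, where $\theta_g = (\theta_g^- + \theta_g^+)/2$ and $\theta_f = (\theta_f^- + \theta_f^+)/2$. If $f(u_+) > 0$ and $u_+ \ge \theta_f$, then $u_+ > \theta_f^+$ and $u_- \ge \theta_g^+$ (hence $g(u_-) > 0$ with $u_-$ on the increasing branch of $g$). -/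
theorem stmt13 (f g : ℝ → ℝ) (θgm θgp θfm θfp um up : ℝ)
    (hθg : θgm ≤ θgp) (hθf : θfm ≤ θfp)
    (hgc : Continuous g) (hfc : Continuous f)
    (hga : StrictAntiOn g (Set.Iic θgm)) (hgz : ∀ u ∈ Set.Icc θgm θgp, g u = 0)
    (hgm : StrictMonoOn g (Set.Ici θgp))
    (hfa : StrictAntiOn f (Set.Iic θfm)) (hfz : ∀ u ∈ Set.Icc θfm θfp, f u = 0)
    (hfm : StrictMonoOn f (Set.Ici θfp))
    (hRH : g um = f up)
    (hI : 0 ≤ Real.sign (um - (θgm + θgp) / 2) * (g um - g ((θgm + θgp) / 2))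
        - Real.sign (up - (θfm + θfp) / 2) * (f up - f ((θfm + θfp) / 2)))
    (hpos : 0 < f up) (hup : (θfm + θfp) / 2 ≤ up) :
    θfp < up ∧ θgp ≤ um := by
  have hfθ : f ((θfm + θfp) / 2) = 0 := hfz _ ⟨by linarith, by linarith⟩
  have hgθ : g ((θgm + θgp) / 2) = 0 := hgz _ ⟨by linarith, by linarith⟩
  have h1 : θfp < up := by
    by_contra h
    push_neg at h
    have := hfz up ⟨by linarith, h⟩
    linarith
  have hsup : Real.sign (up - (θfm + θfp) / 2) = 1 :=
    Real.sign_of_pos (by linarith)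
  rw [hsup, hfθ, hgθ] at hI
  have hgum : 0 < g um := by rw [hRH]; exact hpos
  have hI' : 0 < Real.sign (um - (θgm + θgp) / 2) * g um := by linarith
  have hspos : 0 < Real.sign (um - (θgm + θgp) / 2) := by
    by_contra h
    push_neg at h
    nlinarith
  have hum : (θgm + θgp) / 2 < um := by
    rcases lt_trichotomy (um - (θgm + θgp) / 2) 0 with h | h | h
    · rw [Real.sign_of_neg h] at hspos; linarith
    · rw [show um - (θgm + θgp) / 2 = 0 from h, Real.sign_zero] at hspos; linarith
    · linarith
  refine ⟨h1, ?_⟩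
  by_contra h
  push_neg at h
  have := hgz um ⟨by linarith, le_of_lt h⟩
  linarith
end

section
/- Let $f, g : \mathbb{R} \to \mathbb{R}$ be continuous, with $g$ decreasing on $(-\infty, \theta_g^-]$, zero on $[\theta_g^-, \theta_g^+]$, increasing on $[\theta_g^+, \infty)$, and analogously for $f$. For $\alpha > 0$ let $k_\alpha^+(0-) \ge \theta_g^+$ and $k_\alpha^+(0+) \ge \theta_f^+$ satisfy $g(k_\alpha^+(0-)) = f(k_\alpha^+(0+)) = \alpha$. Suppose $u_-, u_+$ satisfy $g(u_-) = f(u_+)$, and the interface entropy inequality $I(u_-, u_+) = \mathrm{sgn}(u_- - \theta_g)(g(u_-)) - \mathrm{sgn}(u_+ - \theta_f)(f(u_+)) \ge 0$ holds with $\theta_g = (\theta_g^-+\theta_g^+)/2$, $\theta_f = (\theta_f^-+\theta_f^+)/2$. Then $\left[\mathrm{sgn}(u_- - k_\alpha^+(0-)) - \mathrm{sgn}(u_+ - k_\alpha^+(0+))\right](f(u_+) - \alpha) \ge 0$. -/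
private lemma sign_bounds (x : ℝ) : -1 ≤ Real.sign x ∧ Real.sign x ≤ 1 := by
  rcases lt_trichotomy x 0 with h | h | h
  · rw [Real.sign_of_neg h]; norm_num
  · rw [h, Real.sign_zero]; norm_num
  · rw [Real.sign_of_pos h]; norm_num

theorem stmt14 (f g : ℝ → ℝ) (θgm θgp θfm θfp kgm kfp α um up : ℝ)
    (hα : 0 < α)
    (hθg : θgm ≤ θgp) (hθf : θfm ≤ θfp)
    (hgc : Continuous g) (hfc : Continuous f)
    (hga : StrictAntiOn g (Set.Iic θgm)) (hgz : ∀ u ∈ Set.Icc θgm θgp, g u = 0)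
    (hgm : StrictMonoOn g (Set.Ici θgp))
    (hfa : StrictAntiOn f (Set.Iic θfm)) (hfz : ∀ u ∈ Set.Icc θfm θfp, f u = 0)
    (hfm : StrictMonoOn f (Set.Ici θfp))
    (hkm : θgp ≤ kgm) (hkp : θfp ≤ kfp)
    (hkg : g kgm = α) (hkf : f kfp = α)
    (hRH : g um = f up)
    (hI : 0 ≤ Real.sign (um - (θgm + θgp) / 2) * (g um)
        - Real.sign (up - (θfm + θfp) / 2) * (f up)) :
    0 ≤ (Real.sign (um - kgm) - Real.sign (up - kfp)) * (f up - α) := by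
  rcases lt_trichotomy (f up) α with hv | hv | hv
  · -- f up < α : show um < kgm
    have hum : um < kgm := by
      by_contra h
      push_neg at h
      have : g kgm ≤ g um :=
        hgm.monotoneOn (Set.mem_Ici.2 hkm) (Set.mem_Ici.2 (le_trans hkm h)) h
      rw [hkg, hRH] at this
      linarith
    rw [Real.sign_of_neg (by linarith : um - kgm < 0)]
    have hb := (sign_bounds (up - kfp)).1
    nlinarith
  · rw [hv]; simp
  · -- f up > α
    have hv0 : 0 < f up := lt_trans hα hv
    rcases lt_trichotomy up kfp with h | h | h
    · rw [Real.sign_of_neg (by linarith : up - kfp < 0)]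
      have hb := (sign_bounds (um - kgm)).1
      nlinarith
    · rw [h, hkf] at hv; linarith
    · -- up > kfp
      have hsp : Real.sign (up - (θfm + θfp) / 2) = 1 :=
        Real.sign_of_pos (by linarith)
      rw [hsp, hRH, one_mul] at hI
      -- so sign(um - θg) * f up ≥ f up > 0, hence um > θg
      have humg : (θgm + θgp) / 2 < um := by
        by_contra h2
        push_neg at h2
        rcases lt_or_eq_of_le h2 with h3 | h3
        · rw [Real.sign_of_neg (by linarith)] at hI; nlinarith
        · rw [h3, sub_self, Real.sign_zero] at hI; nlinarith
      have humgp : θgp < um := by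
        by_contra h2
        push_neg at h2
        have : g um = 0 := hgz um ⟨by linarith, h2⟩
        rw [hRH] at this; linarith
      have humk : kgm < um := by
        by_contra h2
        push_neg at h2
        have : g um ≤ g kgm :=
          hgm.monotoneOn (Set.mem_Ici.2 (le_of_lt humgp))
            (Set.mem_Ici.2 hkm) h2
        rw [hkg, hRH] at this; linarith
      rw [Real.sign_of_pos (by linarith : 0 < um - kgm),
          Real.sign_of_pos (by linarith : 0 < up - kfp)]
      simp
end

section
/- Let $A : \mathbb{R} \times \mathbb{R} \to [0, \infty)$ be such that for each $x$, $u \mapsto A(x, u)$ is strictly decreasing on $(-\infty, u_M^-(x)]$, zero on $[u_M^-(x), u_M^+(x)]$, and strictly increasing on $[u_M^+(x), \infty)$. Suppose $u, v, \tilde{u}, \tilde{v} \in \mathbb{R}$ satisfy: $A(x, \tilde{v}) = A(y, v)$, $A(y, \tilde{u}) = A(x, u)$, $\mathrm{sgn}(u - u_M^{\pm}(x)) = \mathrm{sgn}(\tilde{u} - u_M^{\pm}(y))$ and $\mathrm{sgn}(v - u_M^{\pm}(y)) = \mathrm{sgn}(\tilde{v} - u_M^{\pm}(x))$ (branch preservation),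 where additionally $A(y,v) > 0$ and $A(x,u) > 0$. Then $(\mathrm{sgn}(v - \tilde{u}) + \mathrm{sgn}(u - \tilde{v}))(A(x, u) - A(y, v)) = 0$. -/
/-!
On a strictly monotone branch `sign (u - vt) = sign (A x u - A x vt)`, and on a strictly
antitone one the sign flips. When `u, ut` and `v, vt` lie on the same kind of branch, the two
transports give `sign (u - vt) = -sign (v - ut)` because `A x vt = A y v` and `A y ut = A x u`.
When they lie on different branches, the flat interval `[u_M⁻, u_M⁺]` separates them and the
two signs are `1` and `-1`. Either way `sign (v - ut) + sign (u - vt) = 0`.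
-/

open Set

namespace Real

theorem sign_eq_neg_one_iff {r : ℝ} : sign r = -1 ↔ r < 0 := by
  refine ⟨fun h => ?_, sign_of_neg⟩
  rcases lt_trichotomy r 0 with hr | rfl | hr
  · exact hr
  · norm_num [sign_zero] at h
  · norm_num [sign_of_pos hr] at h

theorem sign_eq_one_iff {r : ℝ} : sign r = 1 ↔ 0 < r := by
  refine ⟨fun h => ?_, sign_of_pos⟩
  rcases lt_trichotomy r 0 with hr | rfl | hr
  · norm_num [sign_of_neg hr] at h
  · norm_num [sign_zero] at h
  · exact hr

theorem lt_iff_lt_of_sign_sub_eq {a b c d : ℝ} (h : sign (a - b) = sign (c - d)) :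
    a < b ↔ c < d := by
  rw [← sub_neg, ← sign_eq_neg_one_iff, h, sign_eq_neg_one_iff, sub_neg]

theorem lt_iff_lt_of_sign_sub_eq' {a b c d : ℝ} (h : sign (a - b) = sign (c - d)) :
    b < a ↔ d < c := by
  rw [← sub_pos, ← sign_eq_one_iff, h, sign_eq_one_iff, sub_pos]

theorem sign_sub_add_sign_sub_eq_zero {a b c d : ℝ} (hab : a < b) (hcd : c < d) :
    sign (b - a) + sign (c - d) = 0 := by
  rw [sign_of_pos (sub_pos.mpr hab), sign_of_neg (sub_neg.mpr hcd)]
  norm_num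

end Real

theorem StrictMonoOn.sign_sub_apply {f : ℝ → ℝ} {s : Set ℝ} (hf : StrictMonoOn f s)
    {a b : ℝ} (ha : a ∈ s) (hb : b ∈ s) : Real.sign (f a - f b) = Real.sign (a - b) := by
  rcases lt_trichotomy a b with h | rfl | h
  · rw [Real.sign_of_neg (sub_neg.mpr (hf ha hb h)), Real.sign_of_neg (sub_neg.mpr h)]
  · simp
  · rw [Real.sign_of_pos (sub_pos.mpr (hf hb ha h)), Real.sign_of_pos (sub_pos.mpr h)]

theorem sign_sub_add_sign_sub_eq_zero_of_strictMonoOn {f g : ℝ → ℝ} {s t : Set ℝ}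
    (hf : StrictMonoOn f s) (hg : StrictMonoOn g t) {u vt v ut : ℝ}
    (hu : u ∈ s) (hvt : vt ∈ s) (hv : v ∈ t) (hut : ut ∈ t)
    (hfvt : f vt = g v) (hgut : g ut = f u) :
    Real.sign (v - ut) + Real.sign (u - vt) = 0 := by
  rw [← hf.sign_sub_apply hu hvt, ← hg.sign_sub_apply hv hut, hfvt, hgut, ← neg_sub,
    Real.sign_neg, neg_add_cancel]

theorem sign_sub_add_sign_sub_eq_zero_of_strictAntiOn {f g : ℝ → ℝ} {s t : Set ℝ}
    (hf : StrictAntiOn f s) (hg : StrictAntiOn g t) {u vt v ut : ℝ}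
    (hu : u ∈ s) (hvt : vt ∈ s) (hv : v ∈ t) (hut : ut ∈ t)
    (hfvt : f vt = g v) (hgut : g ut = f u) :
    Real.sign (v - ut) + Real.sign (u - vt) = 0 :=
  sign_sub_add_sign_sub_eq_zero_of_strictMonoOn hf.neg hg.neg hu hvt hv hut
    (by simp [hfvt]) (by simp [hgut])

theorem lt_or_gt_of_apply_ne_zero {α β : Type*} [LinearOrder α] [Zero β] {f : α → β}
    {m p w : α} (hf : ∀ w ∈ Icc m p, f w = 0) (hw : f w ≠ 0) : w < m ∨ p < w := by
  by_contra! h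
  exact hw (hf w h)

theorem stmt16_general (A : ℝ → ℝ → ℝ) (uMm uMp : ℝ → ℝ) (x y u v ut vt : ℝ)
    (hMM : ∀ z, uMm z ≤ uMp z)
    (hAa : ∀ z : ℝ, StrictAntiOn (A z) (Set.Iic (uMm z)))
    (hAz : ∀ z : ℝ, ∀ w ∈ Set.Icc (uMm z) (uMp z), A z w = 0)
    (hAm : ∀ z : ℝ, StrictMonoOn (A z) (Set.Ici (uMp z)))
    (hvt : A x vt = A y v) (hut : A y ut = A x u)
    (hsu1 : Real.sign (u - uMm x) = Real.sign (ut - uMm y))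
    (hsu2 : Real.sign (u - uMp x) = Real.sign (ut - uMp y))
    (hsv1 : Real.sign (v - uMm y) = Real.sign (vt - uMm x))
    (hsv2 : Real.sign (v - uMp y) = Real.sign (vt - uMp x))
    (hApos1 : 0 < A y v) (hApos2 : 0 < A x u) :
    (Real.sign (v - ut) + Real.sign (u - vt)) * (A x u - A y v) = 0 := by
  suffices Real.sign (v - ut) + Real.sign (u - vt) = 0 by rw [this, zero_mul]
  have hMx := hMM x
  have hMy := hMM y
  rcases lt_or_gt_of_apply_ne_zero (hAz x) hApos2.ne' with hu | hu <;>
    rcases lt_or_gt_of_apply_ne_zero (hAz y) hApos1.ne' with hv | hv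
  · have hut_branch := (Real.lt_iff_lt_of_sign_sub_eq hsu1).mp hu
    have hvt_branch := (Real.lt_iff_lt_of_sign_sub_eq hsv1).mp hv
    exact sign_sub_add_sign_sub_eq_zero_of_strictAntiOn (hAa x) (hAa y)
      hu.le hvt_branch.le hv.le hut_branch.le hvt hut
  · have hut_branch := (Real.lt_iff_lt_of_sign_sub_eq hsu1).mp hu
    have hvt_branch := (Real.lt_iff_lt_of_sign_sub_eq' hsv2).mp hv
    exact Real.sign_sub_add_sign_sub_eq_zero (by linarith) (by linarith)
  · have hut_branch := (Real.lt_iff_lt_of_sign_sub_eq' hsu2).mp hu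
    have hvt_branch := (Real.lt_iff_lt_of_sign_sub_eq hsv1).mp hv
    rw [add_comm]
    exact Real.sign_sub_add_sign_sub_eq_zero (by linarith) (by linarith)
  · have hut_branch := (Real.lt_iff_lt_of_sign_sub_eq' hsu2).mp hu
    have hvt_branch := (Real.lt_iff_lt_of_sign_sub_eq' hsv2).mp hv
    exact sign_sub_add_sign_sub_eq_zero_of_strictMonoOn (hAm x) (hAm y)
      hu.le hvt_branch.le hv.le hut_branch.le hvt hut

theorem stmt16 (A : ℝ → ℝ → ℝ) (uMm uMp : ℝ → ℝ) (x y u v ut vt : ℝ)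
    (hMM : ∀ z, uMm z ≤ uMp z)
    (hA0 : ∀ z w : ℝ, 0 ≤ A z w)
    (hAa : ∀ z : ℝ, StrictAntiOn (A z) (Set.Iic (uMm z)))
    (hAz : ∀ z : ℝ, ∀ w ∈ Set.Icc (uMm z) (uMp z), A z w = 0)
    (hAm : ∀ z : ℝ, StrictMonoOn (A z) (Set.Ici (uMp z)))
    (hvt : A x vt = A y v) (hut : A y ut = A x u)
    (hsu1 : Real.sign (u - uMm x) = Real.sign (ut - uMm y))
    (hsu2 : Real.sign (u - uMp x) = Real.sign (ut - uMp y))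
    (hsv1 : Real.sign (v - uMm y) = Real.sign (vt - uMm x))
    (hsv2 : Real.sign (v - uMp y) = Real.sign (vt - uMp x))
    (hApos1 : 0 < A y v) (hApos2 : 0 < A x u) :
    (Real.sign (v - ut) + Real.sign (u - vt)) * (A x u - A y v) = 0 :=
  stmt16_general A uMm uMp x y u v ut vt hMM hAa hAz hAm hvt hut hsu1 hsu2 hsv1 hsv2 hApos1 hApos2
end

section
/- Let $0 < C_1 \le C_2$, and let $A : \mathbb{R} \times \mathbb{R} \to [0, \infty)$ be piecewise constant in $x$ with finitely many discontinuities $x_1 < \cdots < x_m$, with $A(x, \cdot) \in C^2(\mathbb{R})$, $C_1 \le \partial_{uu} A(x, u) \le C_2$, and $\min_u A(x, u) = A(x, u_M(x)) = 0$. Let $u : \mathbb{R} \to \mathbb{R}$ be bounded, and suppose there is a map $y : \mathbb{R} \to \mathbb{R}$ and an initial datum $u_0$ such that $A(x, u(x)) = A(y(x), u_0(y(x)))$ for all $x$, with $u(x)$ and $u_0(y(x))$ on corresponding monotone branches. Then for $z_1, z_2$ in a common constancy interval of $A(\cdot, u)$ whose preimages $y(z_1), y(z_2)$ lie in different constancy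 intervals, one has $|u(z_1) - u(z_2)| \le (C_2/C_1)^{3/2}\left[|u_0(y(z_1)) - u_M(y(z_1))| + |u_0(y(z_2)) - u_M(y(z_2))|\right] + |u_M(z_1) - u_M(z_2)|$. -/
/-!
Since `C₁ ≤ ∂ᵤᵤA ≤ C₂` and `A(x, ·)` vanishes to first order at its minimum `u_M(x)`, Taylor's
theorem gives `C₁/2 · (w - u_M(x))² ≤ A(x, w) ≤ C₂/2 · (w - u_M(x))²` for every `x`. Equal flux
heights `A(z, u(z)) = A(y(z), u₀(y(z)))` therefore force
`|u(z) - u_M(z)| ≤ √(C₂/C₁) · |u₀(y(z)) - u_M(y(z))|`, and `√(C₂/C₁) ≤ (C₂/C₁)^{3/2}`.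
The theorem follows from the triangle inequality through `u_M(z₁)` and `u_M(z₂)`.
-/

open Set

theorem exists_eq_add_deriv_mul_add_deriv2_mul_sq {f : ℝ → ℝ} (hf : ContDiff ℝ 2 f) (m v : ℝ) :
    ∃ ξ, f v = f m + deriv f m * (v - m) + deriv (deriv f) ξ * (v - m) ^ 2 / 2 := by
  rcases eq_or_ne m v with rfl | hmv
  · exact ⟨m, by ring⟩
  obtain ⟨ξ, -, hξ⟩ := taylor_mean_remainder_lagrange_iteratedDeriv (n := 1) hmv hf.contDiffOn
  simp only [taylorWithinEval_succ, taylor_within_zero_eval, zero_add, iteratedDerivWithin_one,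
    iteratedDeriv_succ, iteratedDeriv_zero] at hξ
  rw [(hf.differentiable (by norm_num) m).derivWithin (uniqueDiffOn_uIcc hmv m left_mem_uIcc)]
    at hξ
  norm_num at hξ
  exact ⟨ξ, by linarith⟩

theorem sub_mem_Icc_of_isLocalMin_of_deriv2_mem_Icc {f : ℝ → ℝ} {m C₁ C₂ : ℝ}
    (hf : ContDiff ℝ 2 f) (hf'' : ∀ w, deriv (deriv f) w ∈ Icc C₁ C₂) (hmin : IsLocalMin f m)
    (v : ℝ) :
    f v - f m ∈ Icc (C₁ / 2 * (v - m) ^ 2) (C₂ / 2 * (v - m) ^ 2) := by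
  have hf'm : deriv f m = 0 := hmin.deriv_eq_zero
  obtain ⟨ξ, hξ⟩ := exists_eq_add_deriv_mul_add_deriv2_mul_sq hf m v
  have hdiff : f v - f m = deriv (deriv f) ξ / 2 * (v - m) ^ 2 := by rw [hξ, hf'm]; ring
  obtain ⟨hlow, hup⟩ := hf'' ξ
  rw [hdiff]
  exact ⟨by gcongr, by gcongr⟩

theorem abs_sub_le_sqrt_mul_abs_sub_of_eq {f g : ℝ → ℝ} {m m' C₁ C₂ v w : ℝ} (hC₁ : 0 < C₁)
    (hf : C₁ / 2 * (v - m) ^ 2 ≤ f v) (hg : g w ≤ C₂ / 2 * (w - m') ^ 2) (hfg : f v = g w) :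
    |v - m| ≤ √(C₂ / C₁) * |w - m'| := by
  have hsq : (v - m) ^ 2 ≤ C₂ / C₁ * (w - m') ^ 2 := by
    rw [div_mul_eq_mul_div, le_div_iff₀ hC₁]
    linarith
  calc |v - m| = √((v - m) ^ 2) := (Real.sqrt_sq_eq_abs _).symm
    _ ≤ √(C₂ / C₁ * (w - m') ^ 2) := Real.sqrt_le_sqrt hsq
    _ = √(C₂ / C₁) * |w - m'| := by rw [Real.sqrt_mul' _ (sq_nonneg _), Real.sqrt_sq_eq_abs]

theorem abs_sub_min_le_of_flux_eq {A : ℝ → ℝ → ℝ} {uM : ℝ → ℝ} {C₁ C₂ : ℝ} (hC₁ : 0 < C₁)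
    (hA : ∀ x, ContDiff ℝ 2 (A x)) (hA'' : ∀ x w, deriv (deriv (A x)) w ∈ Icc C₁ C₂)
    (hAmin : ∀ x, A x (uM x) = 0) (hA0 : ∀ x w, 0 ≤ A x w) {x x' v w : ℝ}
    (hflux : A x v = A x' w) :
    |v - uM x| ≤ √(C₂ / C₁) * |w - uM x'| := by
  have hmin : ∀ x, IsLocalMin (A x) (uM x) := fun x =>
    .of_forall fun w => hAmin x ▸ hA0 x w
  have hv := sub_mem_Icc_of_isLocalMin_of_deriv2_mem_Icc (hA x) (hA'' x) (hmin x) v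
  have hw := sub_mem_Icc_of_isLocalMin_of_deriv2_mem_Icc (hA x') (hA'' x') (hmin x') w
  rw [hAmin, sub_zero] at hv hw
  exact abs_sub_le_sqrt_mul_abs_sub_of_eq hC₁ hv.1 hw.2 hflux

theorem sqrt_le_rpow_three_halves {r : ℝ} (hr : 1 ≤ r) : √r ≤ r ^ ((3 : ℝ) / 2) := by
  rw [Real.sqrt_eq_rpow]
  exact Real.rpow_le_rpow_of_exponent_le hr (by norm_num)

theorem stmt18_general (A : ℝ → ℝ → ℝ) (uM u u0 y : ℝ → ℝ) (C1 C2 z1 z2 : ℝ)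
    (hC1 : 0 < C1) (hC12 : C1 ≤ C2)
    (hA : ∀ x : ℝ, ContDiff ℝ 2 (A x))
    (hA'' : ∀ x w : ℝ, deriv (deriv (A x)) w ∈ Set.Icc C1 C2)
    (hAmin : ∀ x, A x (uM x) = 0) (hA0 : ∀ x w : ℝ, 0 ≤ A x w)
    (hflux1 : A z1 (u z1) = A (y z1) (u0 (y z1)))
    (hflux2 : A z2 (u z2) = A (y z2) (u0 (y z2))) :
    |u z1 - u z2| ≤
      (C2 / C1) ^ ((3 : ℝ) / 2) *
        (|u0 (y z1) - uM (y z1)| + |u0 (y z2) - uM (y z2)|) + |uM z1 - uM z2| := by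
  set K := (C2 / C1) ^ ((3 : ℝ) / 2)
  have hK : √(C2 / C1) ≤ K := sqrt_le_rpow_three_halves ((one_le_div hC1).mpr hC12)
  have hbound : ∀ {x : ℝ}, A x (u x) = A (y x) (u0 (y x)) →
      |u x - uM x| ≤ K * |u0 (y x) - uM (y x)| := fun hflux =>
    (abs_sub_min_le_of_flux_eq hC1 hA hA'' hAmin hA0 hflux).trans
      (mul_le_mul_of_nonneg_right hK (abs_nonneg _))
  calc |u z1 - u z2| = |(u z1 - uM z1) - (u z2 - uM z2) + (uM z1 - uM z2)| := by ring_nf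
    _ ≤ |u z1 - uM z1| + |u z2 - uM z2| + |uM z1 - uM z2| :=
      (abs_add_le _ _).trans (add_le_add_left (abs_sub _ _) _)
    _ ≤ _ := by linarith [hbound hflux1, hbound hflux2]

theorem stmt18 (A : ℝ → ℝ → ℝ) (uM u u0 y : ℝ → ℝ) (C1 C2 z1 z2 : ℝ)
    (hC1 : 0 < C1) (hC12 : C1 ≤ C2)
    (hA : ∀ x : ℝ, ContDiff ℝ 2 (A x))
    (hA'' : ∀ x w : ℝ, deriv (deriv (A x)) w ∈ Set.Icc C1 C2)
    (hAmin : ∀ x, A x (uM x) = 0) (hA0 : ∀ x w : ℝ, 0 ≤ A x w)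
    (hflux1 : A z1 (u z1) = A (y z1) (u0 (y z1)))
    (hflux2 : A z2 (u z2) = A (y z2) (u0 (y z2)))
    (hbr1 : Real.sign (u z1 - uM z1) = Real.sign (u0 (y z1) - uM (y z1)))
    (hbr2 : Real.sign (u z2 - uM z2) = Real.sign (u0 (y z2) - uM (y z2)))
    (hsame : ∀ w : ℝ, A z1 w = A z2 w)
    (hdiff : ¬ ∀ w : ℝ, A (y z1) w = A (y z2) w) :
    |u z1 - u z2| ≤
      (C2 / C1) ^ ((3 : ℝ) / 2) *
        (|u0 (y z1) - uM (y z1)| + |u0 (y z2) - uM (y z2)|) + |uM z1 - uM z2| :=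
  stmt18_general A uM u u0 y C1 C2 z1 z2 hC1 hC12 hA hA'' hAmin hA0 hflux1 hflux2
end
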